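/- arXiv:1206.4103 — 10 statements merged into one kernel-verified Lean document; each statement's English description precedes it below -/
import Mathlib

section
/- Let f : [0,R) → ℝ be continuously differentiable with f(0) = 0, f'(0) = -1, f' convex and strictly increasing. Let β > 0, λ ≥ 0, h(t) = β + λ t + f(t), g(t) = β + f(t) (so g' = f'). Assume h has a zero in (0,R). Then h has a smallest zero t* ∈ (0,R), h is strictly convex, and for all t ∈ [0, t*): h(t) > 0, g'(t) < 0, and t < t - h(t)/g'(t) < t*. Moreover g'(t*) ≤ -λ ≤ 0. -/
open Set Filter Topology

/-! Since `f'` is strictly increasing, `h' = λ + f'` is too, so `h` is strictly convex on `[0, R)`.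
Starting from `h 0 = β > 0`, the least zero `t*` of `h` exists by compactness and `h > 0` before
it by the intermediate value theorem. Strict convexity puts the tangent slope `h' t` strictly below
the secant slope `-h t / (t* - t) < 0`, and `f' t ≤ h' t`, so the Newton step
`t - h t / f' t` lands in `(t, t*)`. Finally `h` decreases to `0` at `t*` from the left, so
`h' t* ≤ 0`. -/

theorem StrictMonoOn.strictConvexOn_of_hasDerivWithinAt {D : Set ℝ} (hD : Convex ℝ D)
    {f f' : ℝ → ℝ} (hf : ∀ x ∈ D, HasDerivWithinAt f (f' x) D x) (hf' : StrictMonoOn f' D) :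
    StrictConvexOn ℝ D f := by
  refine StrictMonoOn.strictConvexOn_of_deriv hD
    (fun x hx => (hf x hx).continuousWithinAt) fun x hx y hy hxy => ?_
  have hderiv : ∀ z ∈ interior D, deriv f z = f' z := fun z hz =>
    ((hf z (interior_subset hz)).hasDerivAt (mem_interior_iff_mem_nhds.mp hz)).deriv
  rw [hderiv x hx, hderiv y hy]
  exact hf' (interior_subset hx) (interior_subset hy) hxy

theorem exists_first_zero_of_continuousOn_Icc {h : ℝ → ℝ} {a b : ℝ} (hab : a ≤ b)
    (hcont : ContinuousOn h (Icc a b)) (ha : 0 < h a) (hb : h b = 0) :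
    ∃ c ∈ Ioc a b, h c = 0 ∧ ∀ x ∈ Ico a c, 0 < h x := by
  have hzeros : IsCompact (Icc a b ∩ h ⁻¹' {0}) :=
    isCompact_Icc.of_isClosed_subset
      (hcont.preimage_isClosed_of_isClosed isClosed_Icc isClosed_singleton) inter_subset_left
  obtain ⟨c, ⟨⟨hac, hcb⟩, hc⟩, hleast⟩ := hzeros.exists_isLeast ⟨b, ⟨hab, le_rfl⟩, hb⟩
  have hca : c ≠ a := by rintro rfl; exact ha.ne' hc
  refine ⟨c, ⟨lt_of_le_of_ne hac hca.symm, hcb⟩, hc, fun x hx => ?_⟩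
  by_contra! hx_nonpos
  obtain ⟨y, hy, hyz⟩ := intermediate_value_Icc' hx.1
    (hcont.mono (Icc_subset_Icc_right (hx.2.le.trans hcb))) ⟨hx_nonpos, ha.le⟩
  have hcy : c ≤ y := hleast ⟨⟨hy.1, hy.2.trans (hx.2.le.trans hcb)⟩, hyz⟩
  exact (hcy.trans hy.2).not_gt hx.2

theorem newton_step_mem_Ioo {h : ℝ → ℝ} {x s d : ℝ} (hxs : x < s) (hx : 0 < h x)
    (hs : h s = 0) (hd : d < slope h x s) : d < 0 ∧ x - h x / d ∈ Ioo x s := by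
  have hsx : 0 < s - x := sub_pos.mpr hxs
  rw [slope_def_field, hs, zero_sub, lt_div_iff₀ hsx] at hd
  have hd_neg : d < 0 := by nlinarith
  refine ⟨hd_neg, ?_, ?_⟩
  · linarith [div_neg_of_pos_of_neg hx hd_neg]
  · have : -(s - x) < h x / d := by rw [lt_div_iff_of_neg hd_neg]; linarith
    linarith

theorem HasDerivWithinAt.nonpos_of_forall_mem_Ico_le {f : ℝ → ℝ} {f' a b : ℝ} (hab : a < b)
    (hf : HasDerivWithinAt f f' (Ico a b) b) (hmin : ∀ x ∈ Ico a b, f b ≤ f x) : f' ≤ 0 := by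
  have hslope : Tendsto (slope f b) (𝓝[<] b) (𝓝 f') :=
    (hasDerivWithinAt_iff_tendsto_slope' self_notMem_Iio).mp
      (hf.mono_of_mem_nhdsWithin (Ico_mem_nhdsLT hab))
  refine le_of_tendsto hslope ?_
  filter_upwards [Ico_mem_nhdsLT hab] with x hx
  rw [slope_def_field]
  exact div_nonpos_of_nonneg_of_nonpos (sub_nonneg.mpr (hmin x hx)) (sub_nonpos.mpr hx.2.le)

theorem aux_function_smallest_zero_general (R β lam : ℝ) (hβ : 0 < β) (hlam : 0 ≤ lam)
    (f f' : ℝ → ℝ)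
    (hder : ∀ t ∈ Ico (0:ℝ) R, HasDerivWithinAt f (f' t) (Ico (0:ℝ) R) t)
    (hf0 : f 0 = 0)
    (hmono : StrictMonoOn f' (Ico (0:ℝ) R))
    (h : ℝ → ℝ) (hh : h = fun t => β + lam * t + f t)
    (hzero : ∃ t ∈ Ioo (0:ℝ) R, h t = 0) :
    ∃ tstar ∈ Ioo (0:ℝ) R,
      h tstar = 0 ∧
      (∀ t ∈ Ioo (0:ℝ) R, h t = 0 → tstar ≤ t) ∧
      StrictConvexOn ℝ (Ico (0:ℝ) R) h ∧
      (∀ t ∈ Ico (0:ℝ) tstar,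
          0 < h t ∧ f' t < 0 ∧ t < t - h t / f' t ∧ t - h t / f' t < tstar) ∧
      f' tstar ≤ -lam ∧ -lam ≤ 0 := by
  obtain ⟨t₀, ht₀, ht₀_zero⟩ := hzero
  have hderiv : ∀ t ∈ Ico (0:ℝ) R, HasDerivWithinAt h (lam + f' t) (Ico (0:ℝ) R) t :=
    fun t ht => by
      subst hh
      simpa using (((hasDerivWithinAt_id t _).const_mul lam).const_add β).fun_add (hder t ht)
  have hconvex : StrictConvexOn ℝ (Ico (0:ℝ) R) h :=
    (hmono.const_add lam).strictConvexOn_of_hasDerivWithinAt (convex_Ico 0 R) hderiv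
  have hcont : ContinuousOn h (Icc 0 t₀) := fun t ht =>
    (hderiv t ⟨ht.1, ht.2.trans_lt ht₀.2⟩).continuousWithinAt.mono
      (Icc_subset_Ico_right ht₀.2)
  obtain ⟨tstar, ⟨htstar_pos, htstar_le⟩, htstar_zero, hpos⟩ :=
    exists_first_zero_of_continuousOn_Icc ht₀.1.le hcont (by simpa [hh, hf0] using hβ) ht₀_zero
  have htstar : tstar ∈ Ioo (0:ℝ) R := ⟨htstar_pos, htstar_le.trans_lt ht₀.2⟩
  have hnewton : ∀ t ∈ Ico (0:ℝ) tstar, f' t < 0 ∧ t - h t / f' t ∈ Ioo t tstar := by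
    intro t ht
    have htR : t ∈ Ico (0:ℝ) R := ⟨ht.1, ht.2.trans htstar.2⟩
    refine newton_step_mem_Ioo ht.2 (hpos t ht) htstar_zero ?_
    calc f' t ≤ lam + f' t := le_add_of_nonneg_left hlam
      _ < slope h t tstar := hconvex.lt_slope_of_hasDerivWithinAt htR
          (Ioo_subset_Ico_self htstar) ht.2 (hderiv t htR)
  have hderiv_nonpos : lam + f' tstar ≤ 0 :=
    ((hderiv tstar (Ioo_subset_Ico_self htstar)).mono
      (Ico_subset_Ico_right htstar.2.le)).nonpos_of_forall_mem_Ico_le htstar_pos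
      fun t ht => htstar_zero ▸ (hpos t ht).le
  refine ⟨tstar, htstar, htstar_zero, fun t ht ht_zero => ?_, hconvex,
    fun t ht => ⟨hpos t ht, hnewton t ht⟩, by linarith, by linarith⟩
  exact not_lt.mp fun hlt => (hpos t ⟨ht.1.le, hlt⟩).ne' ht_zero

/-- The auxiliary function `h(t) = β + λ t + f(t)` has a smallest zero `t* ∈ (0,R)`,
is strictly convex, and for `t ∈ [0,t*)`: `h(t) > 0`, `f'(t) < 0` and
`t < t - h(t)/f'(t) < t*`. Moreover `f'(t*) ≤ -λ ≤ 0`. -/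
theorem aux_function_smallest_zero (R β lam : ℝ) (hR : 0 < R) (hβ : 0 < β) (hlam : 0 ≤ lam)
    (f f' : ℝ → ℝ)
    (hder : ∀ t ∈ Ico (0:ℝ) R, HasDerivWithinAt f (f' t) (Ico (0:ℝ) R) t)
    (hf0 : f 0 = 0) (hf'0 : f' 0 = -1)
    (hconv : ConvexOn ℝ (Ico (0:ℝ) R) f')
    (hmono : StrictMonoOn f' (Ico (0:ℝ) R))
    (h : ℝ → ℝ) (hh : h = fun t => β + lam * t + f t)
    (hzero : ∃ t ∈ Ioo (0:ℝ) R, h t = 0) :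
    ∃ tstar ∈ Ioo (0:ℝ) R,
      h tstar = 0 ∧
      (∀ t ∈ Ioo (0:ℝ) R, h t = 0 → tstar ≤ t) ∧
      StrictConvexOn ℝ (Ico (0:ℝ) R) h ∧
      (∀ t ∈ Ico (0:ℝ) tstar,
          0 < h t ∧ f' t < 0 ∧ t < t - h t / f' t ∧ t - h t / f' t < tstar) ∧
      f' tstar ≤ -lam ∧ -lam ≤ 0 :=
  aux_function_smallest_zero_general R β lam hβ hlam f f' hder hf0 hmono h hh hzero
end

section
/- Under the hypotheses of the previous setting (f majorant, h(t) = β + λt + f(t) with smallest zero t* ∈ (0,R)), the Newton-type iteration map n(t) = t - h(t)/f'(t) satisfies β ≤ n(t) < t* for every t ∈ [0, t*). -/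
open Set

/-! Both bounds reduce, after clearing the negative denominator `f' t`, to tangent-line estimates:
a function whose derivative is strictly increasing lies strictly above its tangent lines.
At `0` this gives `f t ≥ -t`, hence `h t ≥ β - t`, which together with `h t > 0` and `f' t ≥ -1`
yields `β ≤ n t`. At `t` it gives `h t* - h t > (λ + f' t) (t* - t) ≥ f' t (t* - t)`, and since
`h t* = 0` this is `n t < t*`. Positivity of `h` on `[0, t*)` comes from the intermediate value
theorem and the minimality of `t*`. -/

theorem StrictMonoOn.mul_sub_lt_sub_of_hasDerivWithinAt {f f' : ℝ → ℝ} {s : Set ℝ} {a b : ℝ}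
    (hf' : StrictMonoOn f' s) (hf : ∀ x ∈ s, HasDerivWithinAt f (f' x) s x)
    (hab_sub : Icc a b ⊆ s) (hab : a < b) :
    f' a * (b - a) < f b - f a := by
  obtain ⟨c, hc, hslope⟩ := exists_hasDerivAt_eq_slope f f' hab
    (fun x hx => (hf x (hab_sub hx)).continuousWithinAt.mono hab_sub)
    (fun x hx => ((hf x (hab_sub (Ioo_subset_Icc_self hx))).mono hab_sub).hasDerivAt
      (Icc_mem_nhds hx.1 hx.2))
  have hac : f' a < f' c :=
    hf' (hab_sub (left_mem_Icc.2 hab.le)) (hab_sub (Ioo_subset_Icc_self hc)) hc.1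
  rwa [hslope, lt_div_iff₀ (sub_pos.2 hab)] at hac

theorem StrictMonoOn.mul_sub_le_sub_of_hasDerivWithinAt {f f' : ℝ → ℝ} {s : Set ℝ} {a b : ℝ}
    (hf' : StrictMonoOn f' s) (hf : ∀ x ∈ s, HasDerivWithinAt f (f' x) s x)
    (hab_sub : Icc a b ⊆ s) (hab : a ≤ b) :
    f' a * (b - a) ≤ f b - f a := by
  rcases hab.eq_or_lt with rfl | hab
  · simp
  · exact (hf'.mul_sub_lt_sub_of_hasDerivWithinAt hf hab_sub hab).le

theorem IsPreconnected.pos_of_forall_ne_zero {X : Type*} [TopologicalSpace X] {s : Set X}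
    {g : X → ℝ} {a : X} (hs : IsPreconnected s) (hg : ContinuousOn g s) (ha : a ∈ s)
    (hga : 0 < g a) (hzero : ∀ x ∈ s, g x ≠ 0) :
    ∀ x ∈ s, 0 < g x := by
  intro x hx
  by_contra! hgx
  obtain ⟨y, hy, hgy⟩ := hs.intermediate_value hx ha hg ⟨hgx, hga.le⟩
  exact hzero y hy hgy

theorem iteration_map_bounds_general (R β lam : ℝ) (hβ : 0 < β) (hlam : 0 ≤ lam)
    (f f' : ℝ → ℝ)
    (hder : ∀ t ∈ Ico (0:ℝ) R, HasDerivWithinAt f (f' t) (Ico (0:ℝ) R) t)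
    (hf0 : f 0 = 0) (hf'0 : f' 0 = -1)
    (hmono : StrictMonoOn f' (Ico (0:ℝ) R))
    (h : ℝ → ℝ) (hh : h = fun t => β + lam * t + f t)
    (tstar : ℝ) (htstar : tstar ∈ Ioo (0:ℝ) R) (hz : h tstar = 0)
    (hmin : ∀ t ∈ Ioo (0:ℝ) R, h t = 0 → tstar ≤ t)
    (hneg : ∀ t ∈ Ico (0:ℝ) tstar, f' t < 0) :
    ∀ t ∈ Ico (0:ℝ) tstar, β ≤ t - h t / f' t ∧ t - h t / f' t < tstar := by
  obtain ⟨htstar0, htstarR⟩ := htstar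
  have hhder : ∀ x ∈ Ico (0:ℝ) R, HasDerivWithinAt h (lam + f' x) (Ico (0:ℝ) R) x := by
    intro x hx
    rw [hh]
    simpa using (((hasDerivWithinAt_id x _).const_mul lam).const_add β).fun_add (hder x hx)
  have hh0 : h 0 = β := by simp [hh, hf0]
  have hpos : ∀ t ∈ Ico (0:ℝ) tstar, 0 < h t := by
    have hcont : ContinuousOn h (Ico 0 R) := fun x hx => (hhder x hx).continuousWithinAt
    refine isPreconnected_Ico.pos_of_forall_ne_zero (hcont.mono (Ico_subset_Ico_right htstarR.le))
      (left_mem_Ico.2 htstar0) (hh0 ▸ hβ) ?_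
    rintro x ⟨hx0, hxt⟩ hx
    rcases hx0.eq_or_lt with rfl | hx0
    · exact hβ.ne' (hh0 ▸ hx)
    · exact (hmin x ⟨hx0, hxt.trans htstarR⟩ hx).not_gt hxt
  intro t ⟨ht0, htt⟩
  have hf't : f' t < 0 := hneg t ⟨ht0, htt⟩
  have hf't_ge : -1 ≤ f' t := hf'0 ▸ hmono.monotoneOn ⟨le_rfl, htstar0.trans htstarR⟩
    ⟨ht0, htt.trans htstarR⟩ ht0
  have hft_ge : -t ≤ f t := by
    simpa [hf0, hf'0] using hmono.mul_sub_le_sub_of_hasDerivWithinAt hder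
      (Icc_subset_Ico_right (htt.trans htstarR)) ht0
  have htangent : (lam + f' t) * (tstar - t) < h tstar - h t :=
    (hmono.const_add lam).mul_sub_lt_sub_of_hasDerivWithinAt hhder (Icc_subset_Ico ht0 htstarR) htt
  have hht : h t = β + lam * t + f t := by rw [hh]
  constructor
  · rw [le_sub_comm, div_le_iff_of_neg hf't]
    rcases le_total β t with hβt | htβ
    · nlinarith [hpos t ⟨ht0, htt⟩]
    · nlinarith [mul_nonneg hlam ht0]
  · rw [sub_lt_comm, lt_div_iff_of_neg hf't]
    nlinarith [mul_nonneg hlam (sub_nonneg.2 htt.le)]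

/-- The Newton-type iteration map `n(t) = t - h(t)/f'(t)` satisfies `β ≤ n(t) < t*`
on `[0,t*)`. -/
theorem iteration_map_bounds (R β lam : ℝ) (hR : 0 < R) (hβ : 0 < β) (hlam : 0 ≤ lam)
    (f f' : ℝ → ℝ)
    (hder : ∀ t ∈ Ico (0:ℝ) R, HasDerivWithinAt f (f' t) (Ico (0:ℝ) R) t)
    (hf0 : f 0 = 0) (hf'0 : f' 0 = -1)
    (hconv : ConvexOn ℝ (Ico (0:ℝ) R) f')
    (hmono : StrictMonoOn f' (Ico (0:ℝ) R))
    (h : ℝ → ℝ) (hh : h = fun t => β + lam * t + f t)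
    (tstar : ℝ) (htstar : tstar ∈ Ioo (0:ℝ) R) (hz : h tstar = 0)
    (hmin : ∀ t ∈ Ioo (0:ℝ) R, h t = 0 → tstar ≤ t)
    (hneg : ∀ t ∈ Ico (0:ℝ) tstar, f' t < 0) :
    ∀ t ∈ Ico (0:ℝ) tstar, β ≤ t - h t / f' t ∧ t - h t / f' t < tstar :=
  iteration_map_bounds_general R β lam hβ hlam f f' hder hf0 hf'0 hmono h hh tstar htstar hz hmin
    hneg
end

section
/- Under the same setting, the iteration map n(t) = t - h(t)/f'(t) maps [0,t*) into [0,t*) and satisfies t < n(t) for all t ∈ [0,t*). -/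
open Set

/-- The Newton-type iteration map `n(t) = t - h(t)/f'(t)` maps `[0,t*)` into itself
and satisfies `t < n(t)` there. -/
theorem iteration_map_maps_into (R β lam : ℝ) (hR : 0 < R) (hβ : 0 < β) (hlam : 0 ≤ lam)
    (f f' : ℝ → ℝ)
    (hder : ∀ t ∈ Ico (0:ℝ) R, HasDerivWithinAt f (f' t) (Ico (0:ℝ) R) t)
    (hf0 : f 0 = 0) (hf'0 : f' 0 = -1)
    (hconv : ConvexOn ℝ (Ico (0:ℝ) R) f')
    (hmono : StrictMonoOn f' (Ico (0:ℝ) R))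
    (h : ℝ → ℝ) (hh : h = fun t => β + lam * t + f t)
    (tstar : ℝ) (htstar : tstar ∈ Ioo (0:ℝ) R) (hz : h tstar = 0)
    (hmin : ∀ t ∈ Ioo (0:ℝ) R, h t = 0 → tstar ≤ t)
    (hneg : ∀ t ∈ Ico (0:ℝ) tstar, f' t < 0) :
    ∀ t ∈ Ico (0:ℝ) tstar, t < t - h t / f' t ∧ t - h t / f' t ∈ Ico (0:ℝ) tstar := by
  obtain ⟨hts0, htsR⟩ := htstar
  have hfc : ContinuousOn f (Ico (0:ℝ) R) := fun x hx => (hder x hx).continuousWithinAt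
  have hhc : ContinuousOn h (Ico (0:ℝ) R) := by
    subst hh
    exact (continuousOn_const.add (continuousOn_const.mul continuousOn_id)).add hfc
  have hh0 : h 0 = β := by simp [hh, hf0]
  -- h is positive on [0, tstar)
  have hpos : ∀ t ∈ Ico (0:ℝ) tstar, 0 < h t := by
    rintro t ⟨ht0, htlt⟩
    by_contra hcon
    push_neg at hcon
    have hsub : Icc (0:ℝ) t ⊆ Ico (0:ℝ) R := fun x ⟨hx0, hxt⟩ =>
      ⟨hx0, lt_of_le_of_lt (hxt.trans htlt.le) htsR⟩
    have hivt := intermediate_value_Icc' ht0 (hhc.mono hsub)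
    have h0mem : (0:ℝ) ∈ Icc (h t) (h 0) := ⟨hcon, by rw [hh0]; exact hβ.le⟩
    obtain ⟨s, ⟨hs0, hst⟩, hs⟩ := hivt h0mem
    have hs0' : 0 < s := by
      rcases hs0.lt_or_eq with hlt | heq
      · exact hlt
      · exfalso; rw [← heq, hh0] at hs; linarith
    have := hmin s ⟨hs0', lt_of_le_of_lt (hst.trans htlt.le) htsR⟩ hs
    linarith
  rintro t ⟨ht0, htlt⟩
  have hfneg : f' t < 0 := hneg t ⟨ht0, htlt⟩
  have hht : 0 < h t := hpos t ⟨ht0, htlt⟩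
  -- MVT on [t, tstar]
  have hIcc : Icc t tstar ⊆ Ico (0:ℝ) R := fun x ⟨hx0, hxt⟩ =>
    ⟨ht0.trans hx0, lt_of_le_of_lt hxt htsR⟩
  have hderiv : ∀ x ∈ Ioo t tstar, HasDerivAt f (f' x) x := by
    rintro x ⟨hx1, hx2⟩
    have hx0 : 0 < x := lt_of_le_of_lt ht0 hx1
    have hxR : x < R := hx2.trans htsR
    exact (hder x ⟨hx0.le, hxR⟩).hasDerivAt (Ico_mem_nhds hx0 hxR)
  obtain ⟨c, hc, hslope⟩ := exists_hasDerivAt_eq_slope f f' htlt (hfc.mono hIcc) hderiv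
  have hcmem : c ∈ Ico (0:ℝ) R := ⟨(ht0.trans hc.1.le), hc.2.trans htsR⟩
  have hmono' : f' t < f' c := hmono ⟨ht0, htlt.trans htsR⟩ hcmem hc.1
  have hsub : tstar - t > 0 := by linarith
  have hft : f tstar - f t = f' c * (tstar - t) := by
    field_simp at hslope
    linarith [hslope]
  have hkey : h t = -(lam + f' c) * (tstar - t) := by
    have h1 : h tstar = β + lam * tstar + f tstar := by rw [hh]
    have h2 : h t = β + lam * t + f t := by rw [hh]
    nlinarith [hz]
  -- key inequality: h t < (tstar - t) * (-f' t)
  have hkey2 : h t < (tstar - t) * (-f' t) := by nlinarith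
  set q := h t / f' t with hq
  have hqe : q * f' t = h t := div_mul_cancel₀ _ (ne_of_lt hfneg)
  have hqneg : q < 0 := by nlinarith
  have hqgt : t - tstar < q := by nlinarith
  refine ⟨by linarith, ⟨by linarith, by linarith⟩⟩
end

section
/- In the case λ = 0 (so h(t) = β + f(t)), the Newton iteration map n(t) = t - h(t)/h'(t) satisfies t* - n(t) ≤ (1/2)(t* - t) for all t ∈ [0, t*), where t* is the smallest zero of h. -/
open Set

/-!
Since `h t* = 0`, we have `h t = f t - f t*`. A convex derivative lies below its chord, which
gives the trapezoid bound `f t* - f t ≤ (t* - t) (f' t + f' t*) / 2`. As `f' < 0` on `[0, t*)`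
and `f'`, being convex, is continuous at the interior point `t*`, we get `f' t* ≤ 0`, hence
`h t ≥ (t* - t) (-f' t) / 2`: the Newton step `-h t / f' t` covers at least half of the distance
to `t*`.
-/

theorem sub_le_mul_add_div_two_of_convexOn_deriv {f f' : ℝ → ℝ} {a b : ℝ} (hab : a ≤ b)
    (hf : ContinuousOn f (Icc a b)) (hderiv : ∀ x ∈ Ioo a b, HasDerivAt f (f' x) x)
    (hconv : ConvexOn ℝ (Icc a b) f') :
    f b - f a ≤ (b - a) * ((f' a + f' b) / 2) := by
  rcases hab.eq_or_lt with rfl | hab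
  · simp
  -- `(b - a)` times the antiderivative of the chord of `f'`, minus `(b - a) * f`
  set g : ℝ → ℝ := fun x => (b - a) * (f' a * (x - a) - f x) + (f' b - f' a) * (x - a) ^ 2 / 2
  have hg_deriv : ∀ x ∈ Ioo a b,
      HasDerivAt g ((b - x) * f' a + (x - a) * f' b - (b - a) * f' x) x := by
    intro x hx
    have hsub : HasDerivAt (fun x : ℝ => x - a) 1 x := (hasDerivAt_id x).sub_const a
    have := (((hsub.const_mul (f' a)).sub (hderiv x hx)).const_mul (b - a)).add
      (((hsub.pow 2).const_mul (f' b - f' a)).div_const 2)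
    exact this.congr_deriv (by ring)
  have hg_mono : MonotoneOn g (Icc a b) := by
    refine monotoneOn_of_deriv_nonneg (convex_Icc a b) ?_ ?_ ?_
    · fun_prop
    · rw [interior_Icc]
      exact fun x hx => (hg_deriv x hx).differentiableAt.differentiableWithinAt
    · rw [interior_Icc]
      intro x hx
      rw [(hg_deriv x hx).deriv]
      have := hconv.secant_mono_aux1 (left_mem_Icc.2 hab.le) (right_mem_Icc.2 hab.le) hx.1 hx.2
      linarith
  have hg_le : g a ≤ g b :=
    hg_mono (left_mem_Icc.2 hab.le) (right_mem_Icc.2 hab.le) hab.le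
  have hscaled : 0 ≤ (b - a) * ((b - a) * ((f' a + f' b) / 2) - (f b - f a)) := by
    simp only [g] at hg_le
    linarith
  linarith [nonneg_of_mul_nonneg_right hscaled (sub_pos.2 hab)]

theorem newton_map_linear_rate_general (R β : ℝ)
    (f f' : ℝ → ℝ)
    (hder : ∀ t ∈ Ico (0:ℝ) R, HasDerivWithinAt f (f' t) (Ico (0:ℝ) R) t)
    (hconv : ConvexOn ℝ (Ico (0:ℝ) R) f')
    (h : ℝ → ℝ) (hh : h = fun t => β + f t)
    (tstar : ℝ) (htstar : tstar ∈ Ioo (0:ℝ) R) (hz : h tstar = 0)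
    (hneg : ∀ t ∈ Ico (0:ℝ) tstar, f' t < 0) :
    ∀ t ∈ Ico (0:ℝ) tstar, tstar - (t - h t / f' t) ≤ (1/2) * (tstar - t) := by
  rintro t ⟨ht0, ht⟩
  have hsub : Icc t tstar ⊆ Ico 0 R := Icc_subset_Ico ht0 htstar.2
  have hf'_tstar : f' tstar ≤ 0 := by
    have hcont : ContinuousAt f' tstar :=
      hconv.continuousOn_interior.continuousAt (by simpa using isOpen_Ioo.mem_nhds htstar)
    refine le_of_tendsto (hcont.tendsto.mono_left (nhdsWithin_le_nhds (s := Iio tstar))) ?_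
    filter_upwards [Ico_mem_nhdsLT htstar.1] with x hx using (hneg x hx).le
  have htrapezoid : f tstar - f t ≤ (tstar - t) * ((f' t + f' tstar) / 2) :=
    sub_le_mul_add_div_two_of_convexOn_deriv ht.le
      (fun x hx => (hder x (hsub hx)).continuousWithinAt.mono hsub)
      (fun x hx => (hder x (hsub (Ioo_subset_Icc_self hx))).hasDerivAt
        (Ico_mem_nhds (ht0.trans_lt hx.1) (hx.2.trans htstar.2)))
      (hconv.subset hsub (convex_Icc t tstar))
  have hht : h t = f t - f tstar := by
    subst hh
    linarith
  have hstep : h t / f' t ≤ -(tstar - t) / 2 := by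
    rw [div_le_iff_of_neg (hneg t ⟨ht0, ht⟩)]
    nlinarith [mul_nonpos_of_nonneg_of_nonpos (sub_nonneg.2 ht.le) hf'_tstar]
  linarith

/-- For `λ = 0`, i.e. `h(t) = β + f(t)`, the Newton iteration map
`n(t) = t - h(t)/h'(t)` satisfies `t* - n(t) ≤ (1/2)(t* - t)` on `[0,t*)`. -/
theorem newton_map_linear_rate (R β : ℝ) (hR : 0 < R) (hβ : 0 < β)
    (f f' : ℝ → ℝ)
    (hder : ∀ t ∈ Ico (0:ℝ) R, HasDerivWithinAt f (f' t) (Ico (0:ℝ) R) t)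
    (hf0 : f 0 = 0) (hf'0 : f' 0 = -1)
    (hconv : ConvexOn ℝ (Ico (0:ℝ) R) f')
    (hmono : StrictMonoOn f' (Ico (0:ℝ) R))
    (h : ℝ → ℝ) (hh : h = fun t => β + f t)
    (tstar : ℝ) (htstar : tstar ∈ Ioo (0:ℝ) R) (hz : h tstar = 0)
    (hmin : ∀ t ∈ Ioo (0:ℝ) R, h t = 0 → tstar ≤ t)
    (hneg : ∀ t ∈ Ico (0:ℝ) tstar, f' t < 0) :
    ∀ t ∈ Ico (0:ℝ) tstar, tstar - (t - h t / f' t) ≤ (1/2) * (tstar - t) :=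
  newton_map_linear_rate_general R β f f' hder hconv h hh tstar htstar hz hneg
end

section
/- In the case λ = 0 with additionally h'(t*) < 0, the Newton iteration map n(t) = t - h(t)/h'(t) satisfies t* - n(t) ≤ (D⁻h'(t*) / (-2 h'(t*))) (t* - t)² for all t ∈ [0, t*), where D⁻h'(t*) denotes the left derivative of h' at t*. -/
/-!
Since `h t* = 0`, the Newton error is `t* - n(t) = A / (-h'(t))` with
`A = h(t*) - h(t) - h'(t)(t* - t)`. Monotonicity of `h'` gives `0 ≤ A` and `-h'(t*) ≤ -h'(t)`.
Convexity of `h'` bounds its increments from `t` by `D⁻h'(t*)` times the step (secant slopes up to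
`t*` are at most the left derivative there), and integrating this bound gives
`A ≤ D⁻h'(t*)/2 · (t* - t)²`.
-/

open Set

lemma ConvexOn.sub_le_mul_sub_of_hasDerivWithinAt_Iio {S : Set ℝ} {g : ℝ → ℝ} {x y s D : ℝ}
    (hg : ConvexOn ℝ S g) (hx : x ∈ S) (hy : y ∈ S) (hs : s ∈ Icc x y)
    (hD : HasDerivWithinAt g D (Iio y) y) :
    g s - g x ≤ D * (s - x) := by
  rcases hs.1.eq_or_lt with rfl | hxs
  · simp
  have hsS : s ∈ S := hg.1.ordConnected.out hx hy hs
  have hslope : slope g x s ≤ D :=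
    (hg.slope_mono hx ⟨hsS, hxs.ne'⟩ ⟨hy, (hxs.trans_le hs.2).ne'⟩ hs.2).trans
      (hg.slope_le_of_hasDerivWithinAt_Iio hx hy (hxs.trans_le hs.2) hD)
  rwa [slope_def_field, div_le_iff₀ (sub_pos.2 hxs)] at hslope

lemma sub_le_sub_of_hasDerivWithinAt_le {f g f' g' : ℝ → ℝ} {a b : ℝ} (hab : a ≤ b)
    (hf : ∀ x ∈ Icc a b, HasDerivWithinAt f (f' x) (Icc a b) x)
    (hg : ∀ x ∈ Icc a b, HasDerivWithinAt g (g' x) (Icc a b) x)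
    (hle : ∀ x ∈ Ioo a b, f' x ≤ g' x) :
    f b - f a ≤ g b - g a := by
  have hmono : MonotoneOn (fun x => g x - f x) (Icc a b) := by
    refine monotoneOn_of_hasDerivWithinAt_nonneg (f' := fun x => g' x - f' x) (convex_Icc a b)
      (fun x hx => ((hg x hx).sub (hf x hx)).continuousWithinAt) (fun x hx => ?_) (fun x hx => ?_)
    · rw [interior_Icc] at hx ⊢
      exact ((hg x (Ioo_subset_Icc_self hx)).sub (hf x (Ioo_subset_Icc_self hx))).mono
        Ioo_subset_Icc_self
    · rw [interior_Icc] at hx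
      exact sub_nonneg.2 (hle x hx)
  have := hmono (left_mem_Icc.2 hab) (right_mem_Icc.2 hab) hab
  linarith

section TaylorBounds

variable {f f' : ℝ → ℝ} {a b : ℝ}

lemma mul_sub_le_sub_of_hasDerivWithinAt_of_monotoneOn (hab : a ≤ b)
    (hf : ∀ x ∈ Icc a b, HasDerivWithinAt f (f' x) (Icc a b) x) (hmono : MonotoneOn f' (Icc a b)) :
    f' a * (b - a) ≤ f b - f a := by
  have hlin : ∀ x ∈ Icc a b, HasDerivWithinAt (fun x => f' a * x) (f' a) (Icc a b) x :=
    fun x _ => by simpa using ((hasDerivAt_id x).const_mul (f' a)).hasDerivWithinAt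
  have := sub_le_sub_of_hasDerivWithinAt_le hab hlin hf fun x hx =>
    hmono (left_mem_Icc.2 hab) (Ioo_subset_Icc_self hx) hx.1.le
  linarith

lemma sub_sub_mul_sub_le_of_hasDerivWithinAt {D : ℝ} (hab : a ≤ b)
    (hf : ∀ x ∈ Icc a b, HasDerivWithinAt f (f' x) (Icc a b) x)
    (hD : ∀ x ∈ Ioo a b, f' x - f' a ≤ D * (x - a)) :
    f b - f a - f' a * (b - a) ≤ D / 2 * (b - a) ^ 2 := by
  have hquad : ∀ x ∈ Icc a b, HasDerivWithinAt (fun x => f' a * x + D / 2 * (x - a) ^ 2)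
      (f' a + D * (x - a)) (Icc a b) x := by
    intro x _
    refine (((hasDerivAt_id' x).const_mul (f' a)).add
      ((((hasDerivAt_id' x).sub_const a).pow 2).const_mul (D / 2))).hasDerivWithinAt.congr_deriv ?_
    ring
  have := sub_le_sub_of_hasDerivWithinAt_le hab hf hquad fun x hx => by linarith [hD x hx]
  linarith

end TaylorBounds

lemma newton_step_error_le {φ φ' : ℝ → ℝ} {a b D : ℝ} (hab : a ≤ b)
    (hφ : ∀ x ∈ Icc a b, HasDerivWithinAt φ (φ' x) (Icc a b) x) (hφb : φ b = 0)
    (hmono : MonotoneOn φ' (Icc a b)) (hneg : φ' b < 0)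
    (hD : ∀ x ∈ Ioo a b, φ' x - φ' a ≤ D * (x - a)) :
    b - (a - φ a / φ' a) ≤ D / (-2 * φ' b) * (b - a) ^ 2 := by
  have hA₀ : 0 ≤ φ b - φ a - φ' a * (b - a) := by
    linarith [mul_sub_le_sub_of_hasDerivWithinAt_of_monotoneOn hab hφ hmono]
  have hA := sub_sub_mul_sub_le_of_hasDerivWithinAt hab hφ hD
  have hφ'ab : φ' a ≤ φ' b := hmono (left_mem_Icc.2 hab) (right_mem_Icc.2 hab) hab
  have hφ'a : φ' a ≠ 0 := by linarith
  calc b - (a - φ a / φ' a) = (φ b - φ a - φ' a * (b - a)) / (-φ' a) := by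
        rw [hφb]; field_simp; ring
    _ ≤ (φ b - φ a - φ' a * (b - a)) / (-φ' b) :=
        div_le_div_of_nonneg_left hA₀ (by linarith) (by linarith)
    _ ≤ D / 2 * (b - a) ^ 2 / (-φ' b) := div_le_div_of_nonneg_right hA (by linarith)
    _ = D / (-2 * φ' b) * (b - a) ^ 2 := by
        have : φ' b ≠ 0 := hneg.ne
        field_simp

theorem newton_map_quadratic_rate_general (R β : ℝ)
    (f f' : ℝ → ℝ)
    (hder : ∀ t ∈ Ico (0:ℝ) R, HasDerivWithinAt f (f' t) (Ico (0:ℝ) R) t)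
    (hconv : ConvexOn ℝ (Ico (0:ℝ) R) f')
    (hmono : StrictMonoOn f' (Ico (0:ℝ) R))
    (h : ℝ → ℝ) (hh : h = fun t => β + f t)
    (tstar : ℝ) (htstar : tstar ∈ Ioo (0:ℝ) R) (hz : h tstar = 0)
    (hstar : f' tstar < 0)
    (D : ℝ) (hD : HasDerivWithinAt f' D (Iio tstar) tstar) :
    ∀ t ∈ Ico (0:ℝ) tstar,
      tstar - (t - h t / f' t) ≤ (D / (-2 * f' tstar)) * (tstar - t) ^ 2 := by
  intro t ht
  have htstarS : tstar ∈ Ico (0:ℝ) R := Ioo_subset_Ico_self htstar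
  have hsub : Icc t tstar ⊆ Ico (0:ℝ) R := fun x hx => ⟨ht.1.trans hx.1, hx.2.trans_lt htstar.2⟩
  refine newton_step_error_le ht.2.le (fun x hx => ?_) hz (hmono.monotoneOn.mono hsub) hstar
    fun x hx => hconv.sub_le_mul_sub_of_hasDerivWithinAt_Iio (hsub (left_mem_Icc.2 ht.2.le))
      htstarS (Ioo_subset_Icc_self hx) hD
  subst hh
  exact ((hder x (hsub hx)).const_add β).mono hsub

/-- For `λ = 0` with `h'(t*) < 0`, the Newton iteration map satisfies
`t* - n(t) ≤ (D⁻h'(t*)/(-2 h'(t*)))(t* - t)²` on `[0,t*)`, where `D⁻h'(t*)` is the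
left derivative of `h' = f'` at `t*`. -/
theorem newton_map_quadratic_rate (R β : ℝ) (hR : 0 < R) (hβ : 0 < β)
    (f f' : ℝ → ℝ)
    (hder : ∀ t ∈ Ico (0:ℝ) R, HasDerivWithinAt f (f' t) (Ico (0:ℝ) R) t)
    (hf0 : f 0 = 0) (hf'0 : f' 0 = -1)
    (hconv : ConvexOn ℝ (Ico (0:ℝ) R) f')
    (hmono : StrictMonoOn f' (Ico (0:ℝ) R))
    (h : ℝ → ℝ) (hh : h = fun t => β + f t)
    (tstar : ℝ) (htstar : tstar ∈ Ioo (0:ℝ) R) (hz : h tstar = 0)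
    (hmin : ∀ t ∈ Ioo (0:ℝ) R, h t = 0 → tstar ≤ t)
    (hneg : ∀ t ∈ Ico (0:ℝ) tstar, f' t < 0)
    (hstar : f' tstar < 0)
    (D : ℝ) (hD : HasDerivWithinAt f' D (Iio tstar) tstar) :
    ∀ t ∈ Ico (0:ℝ) tstar,
      tstar - (t - h t / f' t) ≤ (D / (-2 * f' tstar)) * (tstar - t) ^ 2 :=
  newton_map_quadratic_rate_general R β f f' hder hconv hmono h hh tstar htstar hz hstar D hD
end

section
/- Define t₀ = 0 and t_{k+1} = t_k - h(t_k)/f'(t_k), where h(t)=β+λt+f(t), f a majorant function, and t* the smallest zero of h in (0,R). Then the sequence {t_k} is well defined, strictly increasing, contained in [0,t*), and converges to t*. -/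
open Set Filter

/-- The scalar Newton-type sequence `t₀ = 0`, `t_{k+1} = t_k - h(t_k)/f'(t_k)` is
strictly increasing, contained in `[0,t*)` and converges to `t*`. -/
theorem scalar_sequence_converges (R β lam : ℝ) (hR : 0 < R) (hβ : 0 < β) (hlam : 0 ≤ lam)
    (f f' : ℝ → ℝ)
    (hder : ∀ t ∈ Ico (0:ℝ) R, HasDerivWithinAt f (f' t) (Ico (0:ℝ) R) t)
    (hf0 : f 0 = 0) (hf'0 : f' 0 = -1)
    (hconv : ConvexOn ℝ (Ico (0:ℝ) R) f')
    (hmono : StrictMonoOn f' (Ico (0:ℝ) R))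
    (h : ℝ → ℝ) (hh : h = fun t => β + lam * t + f t)
    (tstar : ℝ) (htstar : tstar ∈ Ioo (0:ℝ) R) (hz : h tstar = 0)
    (hmin : ∀ t ∈ Ioo (0:ℝ) R, h t = 0 → tstar ≤ t)
    (hneg : ∀ t ∈ Ico (0:ℝ) tstar, f' t < 0)
    (t : ℕ → ℝ) (ht0 : t 0 = 0)
    (htk : ∀ k, t (k + 1) = t k - h (t k) / f' (t k)) :
    StrictMono t ∧ (∀ k, t k ∈ Ico (0:ℝ) tstar) ∧
    Tendsto t atTop (nhds tstar) := by
  have hcontf : ContinuousOn f (Ico 0 R) := fun x hx => (hder x hx).continuousWithinAt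
  have hconth : ContinuousOn h (Ico 0 R) := by
    rw [hh]
    exact (continuousOn_const.add (continuousOn_const.mul continuousOn_id)).add hcontf
  have hsubR : Ico (0:ℝ) tstar ⊆ Ico 0 R := fun x hx => ⟨hx.1, hx.2.trans htstar.2⟩
  have hsubRc : Icc (0:ℝ) tstar ⊆ Ico 0 R := fun x hx => ⟨hx.1, lt_of_le_of_lt hx.2 htstar.2⟩
  have hh0 : h 0 = β := by rw [hh]; simp [hf0]
  -- h is positive on [0, tstar)
  have hpos : ∀ x ∈ Ico (0:ℝ) tstar, 0 < h x := by
    intro x hx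
    by_contra hle
    push_neg at hle
    have hx0 : 0 < x := by
      rcases eq_or_lt_of_le hx.1 with heq | hlt
      · exfalso; rw [← heq, hh0] at hle; linarith
      · exact hlt
    have hcont' : ContinuousOn h (Icc 0 x) := hconth.mono
      (fun y hy => ⟨hy.1, lt_of_le_of_lt hy.2 (hx.2.trans htstar.2)⟩)
    have hival : (0:ℝ) ∈ Icc (h x) (h 0) := ⟨hle, by rw [hh0]; exact hβ.le⟩
    obtain ⟨z, hz1, hz2⟩ := intermediate_value_Icc' hx.1 hcont' hival
    have hz0 : 0 < z := by
      rcases eq_or_lt_of_le hz1.1 with heq | hlt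
      · exfalso; rw [← heq, hh0] at hz2; linarith
      · exact hlt
    have := hmin z ⟨hz0, lt_of_le_of_lt hz1.2 (hx.2.trans htstar.2)⟩ hz2
    linarith [lt_of_le_of_lt hz1.2 hx.2]
  -- key step lemma
  have key : ∀ x ∈ Ico (0:ℝ) tstar, x < x - h x / f' x ∧ x - h x / f' x < tstar := by
    intro x hx
    have hfx : f' x < 0 := hneg x hx
    have hhx : 0 < h x := hpos x hx
    have hdivneg : h x / f' x < 0 := div_neg_of_pos_of_neg hhx hfx
    refine ⟨by linarith, ?_⟩
    -- mean value theorem on [x, tstar]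
    have hxR : x ∈ Ico (0:ℝ) R := hsubR hx
    have hlt : x < tstar := hx.2
    have hcf : ContinuousOn f (Icc x tstar) := hcontf.mono
      (fun y hy => ⟨hx.1.trans hy.1, lt_of_le_of_lt hy.2 htstar.2⟩)
    have hd : ∀ y ∈ Ioo x tstar, HasDerivAt f (f' y) y := by
      intro y hy
      have hyR : y ∈ Ico (0:ℝ) R := ⟨hx.1.trans hy.1.le, hy.2.trans htstar.2⟩
      have hyI : y ∈ Ioo (0:ℝ) R := ⟨lt_of_le_of_lt hx.1 hy.1, hy.2.trans htstar.2⟩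
      exact (hder y hyR).hasDerivAt (Filter.mem_of_superset (isOpen_Ioo.mem_nhds hyI)
        Ioo_subset_Ico_self)
    obtain ⟨c, hc, hcval⟩ := exists_hasDerivAt_eq_slope f f' hlt hcf hd
    have hcR : c ∈ Ico (0:ℝ) R := ⟨hx.1.trans hc.1.le, hc.2.trans htstar.2⟩
    have hflt : f' x < f' c := hmono hxR hcR hc.1
    have hslope : f tstar - f x = f' c * (tstar - x) := by
      have hne : tstar - x ≠ 0 := by intro hc0; linarith
      rw [eq_div_iff hne] at hcval
      linarith
    have hhx' : h x = β + lam * x + f x := by rw [hh]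
    have hzt : β + lam * tstar + f tstar = 0 := by rw [hh] at hz; exact hz
    -- h x < -(lam + f' x) * (tstar - x)
    have hkey : h x < -(lam + f' x) * (tstar - x) := by nlinarith
    rw [sub_lt_iff_lt_add]
    have h2 : h x / f' x = -(h x / (-f' x)) := by field_simp
    rw [h2]
    have h3 : h x / (-f' x) < tstar - x := by
      rw [div_lt_iff₀ (by linarith : (0:ℝ) < -f' x)]
      nlinarith
    linarith
  -- membership
  have hmem : ∀ k, t k ∈ Ico (0:ℝ) tstar := by
    intro k
    induction k with
    | zero => rw [ht0]; exact ⟨le_refl 0, htstar.1⟩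
    | succ n ih =>
      rw [htk n]
      exact ⟨(ih.1.trans (key (t n) ih).1.le), (key (t n) ih).2⟩
  have hsm : StrictMono t := strictMono_nat_of_lt_succ (fun n => by
    rw [htk n]; exact (key (t n) (hmem n)).1)
  -- convergence
  have hbdd : BddAbove (Set.range t) := ⟨tstar, by rintro y ⟨k, rfl⟩; exact (hmem k).2.le⟩
  set L := ⨆ k, t k with hLdef
  have htL : Tendsto t atTop (nhds L) := tendsto_atTop_ciSup hsm.monotone hbdd
  have hLle : L ≤ tstar := ciSup_le fun k => (hmem k).2.le
  have hL0 : 0 ≤ L := by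
    have := le_ciSup hbdd 0
    rw [ht0] at this
    exact this
  have hLeq : L = tstar := by
    by_contra hne
    have hLlt : L < tstar := lt_of_le_of_ne hLle hne
    have hLmem : L ∈ Ico (0:ℝ) tstar := ⟨hL0, hLlt⟩
    have hstep : ∀ k, t k + h (t k) ≤ t (k + 1) := by
      intro k
      have hm := hmem k
      have hfneg : f' (t k) < 0 := hneg _ hm
      have hhpos : 0 < h (t k) := hpos _ hm
      have hfge : -1 ≤ f' (t k) := by
        rcases eq_or_lt_of_le hm.1 with heq | hlt
        · rw [← heq, hf'0]
        · rw [← hf'0]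
          exact (hmono ⟨le_refl 0, hR⟩ (hsubR hm) hlt).le
      have hdle : h (t k) / f' (t k) ≤ -h (t k) := by
        rw [div_le_iff_of_neg hfneg]
        nlinarith
      rw [htk k]
      linarith
    have hLR : L ∈ Ico (0:ℝ) R := hsubR hLmem
    have htend : Tendsto (fun k => h (t k)) atTop (nhds (h L)) := by
      apply ((hconth L hLR).tendsto).comp
      apply tendsto_nhdsWithin_of_tendsto_nhds_of_eventually_within _ htL
      exact Filter.Eventually.of_forall fun k => hsubR (hmem k)
    have hfinal : L + h L ≤ L :=
      le_of_tendsto_of_tendsto' (htL.add htend)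
        (htL.comp (tendsto_add_atTop_nat 1)) hstep
    have := hpos L hLmem
    linarith
  exact ⟨hsm, hmem, hLeq ▸ htL⟩
end

section
/- Let F : Ω → ℝ^m be continuously differentiable, x₀ ∈ Ω with F'(x₀) ≠ 0 and rank F'(x) ≤ rank F'(x₀) for all x ∈ Ω, and suppose ‖F'(x₀)†‖ ‖F'(y) - F'(x)‖ ≤ f'(‖y-x‖+‖x-x₀‖) - f'(‖x-x₀‖) for x,y ∈ B(x₀,R) with ‖x-x₀‖+‖y-x‖ < R, where f is a majorant function and h(t)=β+λt+f(t) has smallest zero t*. Then for any x with ‖x - x₀‖ ≤ t < t*, rank F'(x) = rank F'(x₀) ≥ 1 and ‖F'(x)†‖ ≤ -‖F'(x₀)†‖ / f'(t). -/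
open Set ContinuousLinearMap

/-- `B` is the Moore-Penrose inverse of `A`. -/
def IsMoorePenrose {n m : ℕ}
    (A : EuclideanSpace ℝ (Fin n) →L[ℝ] EuclideanSpace ℝ (Fin m))
    (B : EuclideanSpace ℝ (Fin m) →L[ℝ] EuclideanSpace ℝ (Fin n)) : Prop :=
  A ∘L B ∘L A = A ∧ B ∘L A ∘L B = B ∧
  ContinuousLinearMap.adjoint (A ∘L B) = A ∘L B ∧
  ContinuousLinearMap.adjoint (B ∘L A) = B ∘L A

/-- The rank of a continuous linear map. -/
noncomputable def rnk {n m : ℕ}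
    (A : EuclideanSpace ℝ (Fin n) →L[ℝ] EuclideanSpace ℝ (Fin m)) : ℕ :=
  Module.finrank ℝ (LinearMap.range A.toLinearMap)

/-! Let `A = F'(x)`, `B = F'(x₀)` and `S = range (B† B)`. Since `B B† B = B`, the map `B†` inverts
`B` on `S`, so `‖u‖ ≤ ‖B†‖ ‖B u‖` there, and the perturbation bound `‖B†‖ ‖A - B‖ ≤ ε < 1`
(with `ε = f'(t) + 1` from the majorant condition) turns this into `(1 - ε) ‖u‖ ≤ ‖B†‖ ‖A u‖`.
So `A` is injective on `S`; together with `rank A ≤ rank B ≤ dim S` this forces equal ranks and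
makes `S` a complement of `ker A`. A vector `A† y` is the image of its `S`-component under the
orthogonal projection `A† A`, so the lower bound passes to it, and `‖A A† y‖ ≤ ‖y‖` then gives
`‖A†‖ ≤ ‖B†‖ / (1 - ε)`. -/

open Module

section Perturbation

variable {𝕜 E F : Type*} [RCLike 𝕜] [NormedAddCommGroup E] [NormedAddCommGroup F]
  [NormedSpace 𝕜 E] [NormedSpace 𝕜 F] {A B : E →L[𝕜] F} {B' : F →L[𝕜] E} {ε : ℝ}

theorem one_sub_mul_norm_le_of_mem_range_comp (hB : B ∘L B' ∘L B = B)
    (hε : ‖B'‖ * ‖A - B‖ ≤ ε) {x : E} (hx : x ∈ (B' ∘L B).range) :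
    (1 - ε) * ‖x‖ ≤ ‖B'‖ * ‖A x‖ := by
  obtain ⟨u, rfl⟩ := hx
  set x := B' (B u)
  have hfix : B' (B x) = x := congr(B' ($hB u))
  have hBx : ‖B x‖ ≤ ‖A x‖ + ‖(A - B) x‖ := by
    simpa only [sub_apply, norm_sub_rev] using norm_le_norm_add_norm_sub' (B x) (A x)
  calc (1 - ε) * ‖x‖ ≤ ‖B' (B x)‖ - ‖B'‖ * ‖A - B‖ * ‖x‖ := by
        rw [hfix]; nlinarith [norm_nonneg x]
    _ ≤ ‖B'‖ * (‖A x‖ + ‖A - B‖ * ‖x‖) - ‖B'‖ * ‖A - B‖ * ‖x‖ := by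
      grw [B'.le_opNorm, hBx, (A - B).le_opNorm]
    _ = ‖B'‖ * ‖A x‖ := by ring

theorem disjoint_range_comp_ker (hB : B ∘L B' ∘L B = B) (hε : ‖B'‖ * ‖A - B‖ ≤ ε)
    (hε₁ : ε < 1) : Disjoint (B' ∘L B).range A.ker := by
  refine Submodule.disjoint_def.2 fun x hxS hxA ↦ norm_eq_zero.1 ?_
  have := one_sub_mul_norm_le_of_mem_range_comp hB hε hxS
  have hAx : A x = 0 := hxA
  rw [hAx, norm_zero, mul_zero] at this
  nlinarith [norm_nonneg x]

theorem finrank_range_le_finrank_range_comp [FiniteDimensional 𝕜 E] (hB : B ∘L B' ∘L B = B) :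
    finrank 𝕜 B.range ≤ finrank 𝕜 (B' ∘L B).range := by
  have hrange : B.range = (B' ∘L B).range.map B.toLinearMap := by
    conv_lhs => rw [← hB]
    exact LinearMap.range_comp _ _
  exact hrange ▸ Submodule.finrank_map_le _ _

theorem finrank_range_eq_and_isCompl_of_perturb [FiniteDimensional 𝕜 E]
    (hB : B ∘L B' ∘L B = B) (hε : ‖B'‖ * ‖A - B‖ ≤ ε) (hε₁ : ε < 1)
    (hrk : finrank 𝕜 A.range ≤ finrank 𝕜 B.range) :
    finrank 𝕜 A.range = finrank 𝕜 B.range ∧ IsCompl (B' ∘L B).range A.ker := by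
  have hdisj := disjoint_range_comp_ker hB hε hε₁
  have hS := Submodule.finrank_add_finrank_le_of_disjoint hdisj
  have hnullity := LinearMap.finrank_range_add_finrank_ker A.toLinearMap
  have hBS := finrank_range_le_finrank_range_comp hB
  exact ⟨by omega, (Submodule.isCompl_iff_disjoint _ _ (by omega)).2 hdisj⟩

end Perturbation

section MoorePenrose

variable {𝕜 E F : Type*} [RCLike 𝕜] [NormedAddCommGroup E] [NormedAddCommGroup F]
  [InnerProductSpace 𝕜 E] [InnerProductSpace 𝕜 F] [CompleteSpace E]

theorem isStarProjection_comp_of_comp_comp_eq {S : F →L[𝕜] E} {T : E →L[𝕜] F}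
    (h : S ∘L T ∘L S = S) (hsa : adjoint (S ∘L T) = S ∘L T) : IsStarProjection (S ∘L T) where
  isIdempotentElem := ContinuousLinearMap.ext fun v ↦ congr($h (T v))
  isSelfAdjoint := by rw [IsSelfAdjoint, star_eq_adjoint, hsa]

theorem IsStarProjection.norm_apply_le {p : E →L[𝕜] E} (hp : IsStarProjection p) (x : E) :
    ‖p x‖ ≤ ‖x‖ :=
  (p.le_of_opNorm_le hp.norm_le x).trans_eq (one_mul _)

variable {A B : E →L[𝕜] F} {A' B' : F →L[𝕜] E} {ε : ℝ}

theorem one_sub_mul_norm_le_of_comp_apply_eq (hA₂ : A' ∘L A ∘L A' = A')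
    (hA₄ : adjoint (A' ∘L A) = A' ∘L A) (hB : B ∘L B' ∘L B = B)
    (hε : ‖B'‖ * ‖A - B‖ ≤ ε) (hε₁ : ε < 1) (hcompl : IsCompl (B' ∘L B).range A.ker)
    {u : E} (hu : A' (A u) = u) : (1 - ε) * ‖u‖ ≤ ‖B'‖ * ‖A u‖ := by
  obtain ⟨x, hx, k, hk, rfl⟩ :=
    Submodule.mem_sup.1 (hcompl.sup_eq_top ▸ Submodule.mem_top : u ∈ (B' ∘L B).range ⊔ A.ker)
  have hAk : A k = 0 := hk
  have hQ := isStarProjection_comp_of_comp_comp_eq hA₂ hA₄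
  rw [map_add, hAk, add_zero] at hu ⊢
  calc (1 - ε) * ‖x + k‖ = (1 - ε) * ‖(A' ∘L A) x‖ := by rw [← hu]; rfl
    _ ≤ (1 - ε) * ‖x‖ := by gcongr; exact hQ.norm_apply_le x
    _ ≤ ‖B'‖ * ‖A x‖ := one_sub_mul_norm_le_of_mem_range_comp hB hε hx

theorem finrank_range_eq_and_norm_le_of_perturb [CompleteSpace F] [FiniteDimensional 𝕜 E]
    (hA₁ : A ∘L A' ∘L A = A) (hA₂ : A' ∘L A ∘L A' = A')
    (hA₃ : adjoint (A ∘L A') = A ∘L A') (hA₄ : adjoint (A' ∘L A) = A' ∘L A)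
    (hB : B ∘L B' ∘L B = B) (hrk : finrank 𝕜 A.range ≤ finrank 𝕜 B.range)
    (hε : ‖B'‖ * ‖A - B‖ ≤ ε) (hε₁ : ε < 1) :
    finrank 𝕜 A.range = finrank 𝕜 B.range ∧ ‖A'‖ ≤ ‖B'‖ / (1 - ε) := by
  obtain ⟨hrank, hcompl⟩ := finrank_range_eq_and_isCompl_of_perturb hB hε hε₁ hrk
  refine ⟨hrank, opNorm_le_bound _ (div_nonneg (norm_nonneg _) (by linarith)) fun y ↦ ?_⟩
  have hP := isStarProjection_comp_of_comp_comp_eq hA₁ hA₃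
  have hy := one_sub_mul_norm_le_of_comp_apply_eq hA₂ hA₄ hB hε hε₁ hcompl
    (u := A' y) congr($hA₂ y)
  rw [div_mul_eq_mul_div, le_div_iff₀ (by linarith), mul_comm]
  calc (1 - ε) * ‖A' y‖ ≤ ‖B'‖ * ‖(A ∘L A') y‖ := hy
    _ ≤ ‖B'‖ * ‖y‖ := by grw [hP.norm_apply_le]

end MoorePenrose

theorem pinv_bound_general (n m : ℕ) (Ω : Set (EuclideanSpace ℝ (Fin n)))
    (F' : EuclideanSpace ℝ (Fin n) → (EuclideanSpace ℝ (Fin n) →L[ℝ] EuclideanSpace ℝ (Fin m)))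
    (pinv : EuclideanSpace ℝ (Fin n) → (EuclideanSpace ℝ (Fin m) →L[ℝ] EuclideanSpace ℝ (Fin n)))
    (hpinv : ∀ x ∈ Ω, IsMoorePenrose (F' x) (pinv x))
    (x₀ : EuclideanSpace ℝ (Fin n))
    (hF'x₀ : F' x₀ ≠ 0)
    (hrank : ∀ x ∈ Ω, rnk (F' x) ≤ rnk (F' x₀))
    (R : ℝ) (hball : Metric.ball x₀ R ⊆ Ω)
    (f' : ℝ → ℝ)
    (hf'0 : f' 0 = -1)
    (hmono : StrictMonoOn f' (Ico (0:ℝ) R))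
    (hmaj : ∀ x ∈ Metric.ball x₀ R, ∀ y ∈ Metric.ball x₀ R,
        ‖x - x₀‖ + ‖y - x‖ < R →
        ‖pinv x₀‖ * ‖F' y - F' x‖ ≤ f' (‖y - x‖ + ‖x - x₀‖) - f' ‖x - x₀‖)
    (tstar : ℝ) (htstar : tstar ∈ Ioo (0:ℝ) R)
    (hneg : ∀ t ∈ Ico (0:ℝ) tstar, f' t < 0) :
    ∀ (x : EuclideanSpace ℝ (Fin n)) (t : ℝ), ‖x - x₀‖ ≤ t → t < tstar →
      rnk (F' x) = rnk (F' x₀) ∧ 1 ≤ rnk (F' x) ∧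
      ‖pinv x‖ ≤ -‖pinv x₀‖ / f' t := by
  intro x t hxt ht
  have hR : 0 < R := htstar.1.trans htstar.2
  have ht₀ : 0 ≤ t := (norm_nonneg _).trans hxt
  have hx : x ∈ Metric.ball x₀ R := mem_ball_iff_norm.2 (by linarith [htstar.2])
  have hx₀ : x₀ ∈ Metric.ball x₀ R := Metric.mem_ball_self hR
  have hft : f' t < 0 := hneg t ⟨ht₀, ht⟩
  have hpert : ‖pinv x₀‖ * ‖F' x - F' x₀‖ ≤ f' t + 1 := by
    have hmaj₀ := hmaj x₀ hx₀ x hx (by simpa using mem_ball_iff_norm.1 hx)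
    have hmono₀ : f' ‖x - x₀‖ ≤ f' t :=
      hmono.monotoneOn ⟨norm_nonneg _, by linarith [htstar.2]⟩ ⟨ht₀, by linarith [htstar.2]⟩ hxt
    simp only [sub_self, norm_zero, add_zero, hf'0] at hmaj₀
    linarith
  obtain ⟨hA₁, hA₂, hA₃, hA₄⟩ := hpinv x (hball hx)
  obtain ⟨hrk, hnorm⟩ := finrank_range_eq_and_norm_le_of_perturb hA₁ hA₂ hA₃ hA₄
    (hpinv x₀ (hball hx₀)).1 (hrank x (hball hx)) hpert (by linarith)
  refine ⟨hrk, ?_, by rwa [show 1 - (f' t + 1) = -f' t by ring, div_neg, ← neg_div] at hnorm⟩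
  rw [rnk, hrk, Submodule.one_le_finrank_iff, Ne, LinearMap.range_eq_bot]
  exact_mod_cast hF'x₀

/-- Under the majorant condition, for `‖x - x₀‖ ≤ t < t*` one has
`rank F'(x) = rank F'(x₀) ≥ 1` and `‖F'(x)†‖ ≤ -‖F'(x₀)†‖ / f'(t)`. -/
theorem pinv_bound (n m : ℕ) (Ω : Set (EuclideanSpace ℝ (Fin n))) (hΩ : IsOpen Ω)
    (F : EuclideanSpace ℝ (Fin n) → EuclideanSpace ℝ (Fin m))
    (F' : EuclideanSpace ℝ (Fin n) → (EuclideanSpace ℝ (Fin n) →L[ℝ] EuclideanSpace ℝ (Fin m)))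
    (pinv : EuclideanSpace ℝ (Fin n) → (EuclideanSpace ℝ (Fin m) →L[ℝ] EuclideanSpace ℝ (Fin n)))
    (hF : ∀ x ∈ Ω, HasFDerivAt F (F' x) x)
    (hpinv : ∀ x ∈ Ω, IsMoorePenrose (F' x) (pinv x))
    (x₀ : EuclideanSpace ℝ (Fin n)) (hx₀ : x₀ ∈ Ω)
    (hF'x₀ : F' x₀ ≠ 0)
    (hrank : ∀ x ∈ Ω, rnk (F' x) ≤ rnk (F' x₀))
    (R : ℝ) (hR : 0 < R) (hball : Metric.ball x₀ R ⊆ Ω)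
    (β lam : ℝ) (hβ : β = ‖pinv x₀ (F x₀)‖) (hβpos : 0 < β) (hlam : 0 ≤ lam)
    (f f' : ℝ → ℝ)
    (hder : ∀ t ∈ Ico (0:ℝ) R, HasDerivWithinAt f (f' t) (Ico (0:ℝ) R) t)
    (hf0 : f 0 = 0) (hf'0 : f' 0 = -1)
    (hconv : ConvexOn ℝ (Ico (0:ℝ) R) f')
    (hmono : StrictMonoOn f' (Ico (0:ℝ) R))
    (hmaj : ∀ x ∈ Metric.ball x₀ R, ∀ y ∈ Metric.ball x₀ R,
        ‖x - x₀‖ + ‖y - x‖ < R →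
        ‖pinv x₀‖ * ‖F' y - F' x‖ ≤ f' (‖y - x‖ + ‖x - x₀‖) - f' ‖x - x₀‖)
    (h : ℝ → ℝ) (hh : h = fun t => β + lam * t + f t)
    (tstar : ℝ) (htstar : tstar ∈ Ioo (0:ℝ) R) (hz : h tstar = 0)
    (hmin : ∀ t ∈ Ioo (0:ℝ) R, h t = 0 → tstar ≤ t)
    (hneg : ∀ t ∈ Ico (0:ℝ) tstar, f' t < 0) :
    ∀ (x : EuclideanSpace ℝ (Fin n)) (t : ℝ), ‖x - x₀‖ ≤ t → t < tstar →
      rnk (F' x) = rnk (F' x₀) ∧ 1 ≤ rnk (F' x) ∧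
      ‖pinv x‖ ≤ -‖pinv x₀‖ / f' t :=
  pinv_bound_general n m Ω F' pinv hpinv x₀ hF'x₀ hrank R hball f' hf'0 hmono hmaj tstar htstar hneg
end

section
/- Let F : Ω → ℝ^m be continuously differentiable satisfying the majorant condition ‖F'(x₀)†‖ ‖F'(y)-F'(x)‖ ≤ f'(‖y-x‖+‖x-x₀‖) - f'(‖x-x₀‖) on B(x₀,R). If ‖x-x₀‖ ≤ t, ‖y-x‖ ≤ v - t with 0 ≤ t < v < R, then the linearization errors satisfy ‖F'(x₀)†‖ ‖F(y) - F(x) - F'(x)(y-x)‖ ≤ (f(v) - f(t) - f'(t)(v-t)) · ‖y-x‖²/(v-t)². -/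
/-!
Along the segment `s ↦ x + s • (y - x)` the linearization error
`s ↦ F (x + s • (y - x)) - F x - s • F' x (y - x)` has derivative
`(F' (x + s • (y - x)) - F' x) (y - x)`. The majorant condition, together with the monotonicity
of the difference quotients of the convex `f'`, bounds its weighted norm by the derivative of the
scalar error `s ↦ ‖y - x‖² / (v - t)² * (f (t + s (v - t)) - f t - f' t * s (v - t))`, and the
fencing form of the mean value inequality compares the two at `s = 1`.
-/

open Set ContinuousLinearMap

theorem ConvexOn.slope_le_slope {φ : ℝ → ℝ} {S : Set ℝ} (hφ : ConvexOn ℝ S φ)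
    {a b c d : ℝ} (ha : a ∈ S) (hb : b ∈ S) (hc : c ∈ S) (hd : d ∈ S)
    (hab : a < b) (hcd : c < d) (hac : a ≤ c) (hbd : b ≤ d) :
    slope φ a b ≤ slope φ c d :=
  calc slope φ a b ≤ slope φ a d :=
        hφ.slope_mono ha ⟨hb, hab.ne'⟩ ⟨hd, (hab.trans_le hbd).ne'⟩ hbd
    _ = slope φ d a := slope_comm φ a d
    _ ≤ slope φ d c :=
        hφ.slope_mono hd ⟨ha, (hab.trans_le hbd).ne⟩ ⟨hc, hcd.ne⟩ hac
    _ = slope φ c d := slope_comm φ d c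

theorem ConvexOn.mul_sub_le_mul_sub {φ : ℝ → ℝ} {S : Set ℝ} (hφ : ConvexOn ℝ S φ)
    {a t s τ κ : ℝ} (ha : a ∈ S) (has : a + s * τ ∈ S) (ht : t ∈ S) (hts : t + s * κ ∈ S)
    (hat : a ≤ t) (hs : 0 ≤ s) (hτ : 0 ≤ τ) (hτκ : τ ≤ κ) :
    κ * (φ (a + s * τ) - φ a) ≤ τ * (φ (t + s * κ) - φ t) := by
  rcases hs.eq_or_lt with rfl | hs
  · simp
  rcases hτ.eq_or_lt with rfl | hτ
  · simp
  have hsτ : 0 < s * τ := mul_pos hs hτ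
  have hsκ : 0 < s * κ := mul_pos hs (hτ.trans_le hτκ)
  have key := hφ.slope_le_slope ha has ht hts (by linarith) (by linarith) hat
    (by nlinarith)
  rw [slope_def_field, slope_def_field, add_sub_cancel_left, add_sub_cancel_left,
    div_le_div_iff₀ hsτ hsκ] at key
  nlinarith

theorem hasDerivWithinAt_Ici_sub_linearization {f f' : ℝ → ℝ} {R t k s : ℝ}
    (hder : ∀ u ∈ Ico (0:ℝ) R, HasDerivWithinAt f (f' u) (Ico 0 R) u)
    (hk : 0 ≤ k) (hs : t + s * k ∈ Ico (0:ℝ) R) :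
    HasDerivWithinAt (fun s => f (t + s * k) - f t - f' t * (s * k))
      ((f' (t + s * k) - f' t) * k) (Ici s) s := by
  have hline : HasDerivWithinAt (fun s : ℝ => t + s * k) k (Ici s) s := by
    simpa using (((hasDerivAt_id s).mul_const k).const_add t).hasDerivWithinAt
  have hmaps : MapsTo (fun s : ℝ => t + s * k) (Ici s) (Ici (t + s * k)) :=
    fun z hz => by simp only [mem_Ici] at hz ⊢; nlinarith
  have hcomp :=
    ((hder _ hs).mono_of_mem_nhdsWithin (Ico_mem_nhdsGE_of_mem hs)).comp s hline hmaps
  have hlin : HasDerivWithinAt (fun s : ℝ => f' t * (s * k)) (f' t * (1 * k)) (Ici s) s :=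
    (((hasDerivAt_id s).mul_const k).const_mul (f' t)).hasDerivWithinAt
  exact ((hcomp.sub_const (f t)).sub hlin).congr_deriv (by ring)

section

variable {E G : Type*} [NormedAddCommGroup E] [NormedSpace ℝ E]
  [NormedAddCommGroup G] [NormedSpace ℝ G]

theorem norm_linearization_error_le_of_deriv_bound {F : E → G} {F' : E → E →L[ℝ] G} {x y : E}
    (hF : ∀ s ∈ Icc (0:ℝ) 1, HasFDerivAt F (F' (x + s • (y - x))) (x + s • (y - x)))
    {K : ℝ} (hK : 0 ≤ K) {φ φ' : ℝ → ℝ} (hφ : ContinuousOn φ (Icc 0 1))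
    (hφ' : ∀ s ∈ Ico (0:ℝ) 1, HasDerivWithinAt φ (φ' s) (Ici s) s) (hφ0 : 0 ≤ φ 0)
    (hbound : ∀ s ∈ Ico (0:ℝ) 1, K * ‖(F' (x + s • (y - x)) - F' x) (y - x)‖ ≤ φ' s) :
    K * ‖F y - F x - F' x (y - x)‖ ≤ φ 1 := by
  set g : ℝ → G := fun s => K • (F (x + s • (y - x)) - F x - s • F' x (y - x))
  have hg : ∀ s ∈ Icc (0:ℝ) 1,
      HasDerivAt g (K • (F' (x + s • (y - x)) - F' x) (y - x)) s := by
    intro s hs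
    have hline : HasDerivAt (fun s : ℝ => x + s • (y - x)) (y - x) s := by
      simpa using ((hasDerivAt_id s).smul_const (y - x)).const_add x
    have := (((hF s hs).comp_hasDerivAt s hline).sub_const (F x)).sub
      ((hasDerivAt_id s).smul_const (F' x (y - x)))
    rw [sub_apply]
    exact (this.const_smul K).congr_deriv (by simp)
  have key := image_norm_le_of_norm_deriv_right_le_deriv_boundary'
    (fun s hs => (hg s hs).continuousAt.continuousWithinAt)
    (fun s hs => (hg s (Ico_subset_Icc_self hs)).hasDerivWithinAt)
    (by simpa [g] using hφ0) hφ hφ'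
    (fun s hs => by simpa [norm_smul, abs_of_nonneg hK] using hbound s hs)
    (right_mem_Icc.2 zero_le_one)
  simpa [g, norm_smul, abs_of_nonneg hK] using key

theorem norm_linearization_error_le_of_majorant {F : E → G} {F' : E → E →L[ℝ] G} {x y : E}
    (hF : ∀ s ∈ Icc (0:ℝ) 1, HasFDerivAt F (F' (x + s • (y - x))) (x + s • (y - x)))
    {K : ℝ} (hK : 0 ≤ K) {f f' : ℝ → ℝ} {R t v c : ℝ}
    (hder : ∀ u ∈ Ico (0:ℝ) R, HasDerivWithinAt f (f' u) (Ico 0 R) u)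
    (ht : 0 ≤ t) (htv : t ≤ v) (hvR : v < R)
    (hbound : ∀ s ∈ Ico (0:ℝ) 1, K * ‖(F' (x + s • (y - x)) - F' x) (y - x)‖ ≤
      c * ((f' (t + s * (v - t)) - f' t) * (v - t))) :
    K * ‖F y - F x - F' x (y - x)‖ ≤ c * (f v - f t - f' t * (v - t)) := by
  have hmem : ∀ s ∈ Icc (0:ℝ) 1, t + s * (v - t) ∈ Ico (0:ℝ) R := fun s hs =>
    ⟨by nlinarith [hs.1], by nlinarith [hs.2]⟩
  have hfc : ContinuousOn (fun s => f (t + s * (v - t))) (Icc 0 1) :=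
    ContinuousOn.comp (fun u hu => (hder u hu).continuousWithinAt) (by fun_prop) hmem
  have key := norm_linearization_error_le_of_deriv_bound hF hK
    (φ := fun s => c * (f (t + s * (v - t)) - f t - f' t * (s * (v - t))))
    (continuousOn_const.mul ((hfc.sub continuousOn_const).sub (by fun_prop)))
    (fun s hs => (hasDerivWithinAt_Ici_sub_linearization hder (sub_nonneg.2 htv)
      (hmem s (Ico_subset_Icc_self hs))).const_mul c)
    (by simp) hbound
  simpa using key

theorem add_smul_sub_mem_ball {x y x₀ : E} {t v R s : ℝ} (hxt : ‖x - x₀‖ ≤ t)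
    (hyx : ‖y - x‖ ≤ v - t) (hvR : v < R) (hs : s ∈ Icc (0:ℝ) 1) :
    x + s • (y - x) ∈ Metric.ball x₀ R := by
  rw [Metric.mem_ball, dist_eq_norm, add_sub_right_comm]
  calc ‖x - x₀ + s • (y - x)‖ ≤ ‖x - x₀‖ + s * ‖y - x‖ := by
        simpa [norm_smul, abs_of_nonneg hs.1] using norm_add_le (x - x₀) (s • (y - x))
    _ < R := by nlinarith [hs.1, hs.2, norm_nonneg (y - x)]

end

theorem linearization_error_bound_general (n m : ℕ)
    (F : EuclideanSpace ℝ (Fin n) → EuclideanSpace ℝ (Fin m))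
    (F' : EuclideanSpace ℝ (Fin n) → (EuclideanSpace ℝ (Fin n) →L[ℝ] EuclideanSpace ℝ (Fin m)))
    (x₀ : EuclideanSpace ℝ (Fin n)) (R : ℝ)
    (hF : ∀ x ∈ Metric.ball x₀ R, HasFDerivAt F (F' x) x)
    (B₀ : EuclideanSpace ℝ (Fin m) →L[ℝ] EuclideanSpace ℝ (Fin n))
    (f f' : ℝ → ℝ)
    (hder : ∀ t ∈ Ico (0:ℝ) R, HasDerivWithinAt f (f' t) (Ico (0:ℝ) R) t)
    (hconv : ConvexOn ℝ (Ico (0:ℝ) R) f')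
    (hmaj : ∀ x ∈ Metric.ball x₀ R, ∀ y ∈ Metric.ball x₀ R,
        ‖x - x₀‖ + ‖y - x‖ < R →
        ‖B₀‖ * ‖F' y - F' x‖ ≤ f' (‖y - x‖ + ‖x - x₀‖) - f' ‖x - x₀‖) :
    ∀ x ∈ Metric.ball x₀ R, ∀ y ∈ Metric.ball x₀ R, ∀ t v : ℝ,
      0 ≤ t → t < v → v < R → ‖x - x₀‖ ≤ t → ‖y - x‖ ≤ v - t →
      ‖B₀‖ * ‖F y - F x - F' x (y - x)‖ ≤
        (f v - f t - f' t * (v - t)) * ‖y - x‖ ^ 2 / (v - t) ^ 2 := by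
  intro x hx y _ t v ht htv hvR hxt hyx
  set τ := ‖y - x‖
  set a := ‖x - x₀‖
  have hvt : 0 < v - t := sub_pos.2 htv
  have hseg := fun s hs => add_smul_sub_mem_ball (s := s) hxt hyx hvR hs
  refine (norm_linearization_error_le_of_majorant (fun s hs => hF _ (hseg s hs))
    (norm_nonneg B₀) hder ht htv.le hvR (c := τ ^ 2 / (v - t) ^ 2) ?_).trans_eq (by ring)
  intro s hs
  have hsτ : s * τ ≤ v - t := (mul_le_of_le_one_left (norm_nonneg _) hs.2.le).trans hyx
  have hdist : ‖x + s • (y - x) - x‖ = s * τ := by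
    rw [add_sub_cancel_left, norm_smul, Real.norm_of_nonneg hs.1]
  have hmaj' := hmaj x hx _ (hseg s (Ico_subset_Icc_self hs)) (by linarith)
  rw [hdist, add_comm (s * τ)] at hmaj'
  have hslope := hconv.mul_sub_le_mul_sub ⟨norm_nonneg _, by linarith⟩
    ⟨add_nonneg (norm_nonneg _) (mul_nonneg hs.1 (norm_nonneg _)), by linarith⟩
    ⟨ht, by linarith⟩ ⟨by nlinarith [hs.1], by nlinarith [hs.2]⟩ hxt hs.1 (norm_nonneg _) hyx
  calc ‖B₀‖ * ‖(F' (x + s • (y - x)) - F' x) (y - x)‖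
      ≤ ‖B₀‖ * ‖F' (x + s • (y - x)) - F' x‖ * τ := by
        rw [mul_assoc]; exact mul_le_mul_of_nonneg_left (le_opNorm _ _) (norm_nonneg _)
    _ ≤ (f' (a + s * τ) - f' a) * τ := mul_le_mul_of_nonneg_right hmaj' (norm_nonneg _)
    _ ≤ τ ^ 2 / (v - t) ^ 2 * ((f' (t + s * (v - t)) - f' t) * (v - t)) := by
        rw [show τ ^ 2 / (v - t) ^ 2 * ((f' (t + s * (v - t)) - f' t) * (v - t)) =
          τ * (τ * (f' (t + s * (v - t)) - f' t)) / (v - t) by field_simp, le_div_iff₀ hvt]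
        nlinarith [mul_le_mul_of_nonneg_left hslope (norm_nonneg (y - x))]

/-- Bound on the linearization error of `F` in terms of the linearization error of
the majorant function `f`. -/
theorem linearization_error_bound (n m : ℕ)
    (F : EuclideanSpace ℝ (Fin n) → EuclideanSpace ℝ (Fin m))
    (F' : EuclideanSpace ℝ (Fin n) → (EuclideanSpace ℝ (Fin n) →L[ℝ] EuclideanSpace ℝ (Fin m)))
    (x₀ : EuclideanSpace ℝ (Fin n)) (R : ℝ) (hR : 0 < R)
    (hF : ∀ x ∈ Metric.ball x₀ R, HasFDerivAt F (F' x) x)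
    (B₀ : EuclideanSpace ℝ (Fin m) →L[ℝ] EuclideanSpace ℝ (Fin n))
    (hB₀ : IsMoorePenrose (F' x₀) B₀)
    (f f' : ℝ → ℝ)
    (hder : ∀ t ∈ Ico (0:ℝ) R, HasDerivWithinAt f (f' t) (Ico (0:ℝ) R) t)
    (hf0 : f 0 = 0) (hf'0 : f' 0 = -1)
    (hconv : ConvexOn ℝ (Ico (0:ℝ) R) f')
    (hmono : StrictMonoOn f' (Ico (0:ℝ) R))
    (hmaj : ∀ x ∈ Metric.ball x₀ R, ∀ y ∈ Metric.ball x₀ R,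
        ‖x - x₀‖ + ‖y - x‖ < R →
        ‖B₀‖ * ‖F' y - F' x‖ ≤ f' (‖y - x‖ + ‖x - x₀‖) - f' ‖x - x₀‖) :
    ∀ x ∈ Metric.ball x₀ R, ∀ y ∈ Metric.ball x₀ R, ∀ t v : ℝ,
      0 ≤ t → t < v → v < R → ‖x - x₀‖ ≤ t → ‖y - x‖ ≤ v - t →
      ‖B₀‖ * ‖F y - F x - F' x (y - x)‖ ≤
        (f v - f t - f' t * (v - t)) * ‖y - x‖ ^ 2 / (v - t) ^ 2 :=
  linearization_error_bound_general n m F F' x₀ R hF B₀ f f' hder hconv hmaj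
end

section
/- Let F : Ω → ℝ^m be continuously differentiable with F'(x₀) surjective, and suppose ‖F'(x₀)†(F'(x) - F'(x₀))‖ ≤ f'(‖x-x₀‖) - f'(0) < 1 for x in a ball B(x₀, t*) where f is a majorant function and f'(t)+1 < 1 for t < t*. Then F'(x) is surjective for every x ∈ B(x₀, t*), and (F'(x₀)† F'(x))† = F'(x)† F'(x₀). -/
open Set ContinuousLinearMap

/-- If `F'(x₀)` is surjective and the majorant condition holds on `B(x₀,t*)` with
`f'(t) < 0` for `t < t*`, then `F'(x)` is surjective on `B(x₀,t*)` and
`(F'(x₀)† F'(x))† = F'(x)† F'(x₀)`. -/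
theorem surjectivity_propagates (n m : ℕ)
    (F : EuclideanSpace ℝ (Fin n) → EuclideanSpace ℝ (Fin m))
    (F' : EuclideanSpace ℝ (Fin n) → (EuclideanSpace ℝ (Fin n) →L[ℝ] EuclideanSpace ℝ (Fin m)))
    (pinv : EuclideanSpace ℝ (Fin n) → (EuclideanSpace ℝ (Fin m) →L[ℝ] EuclideanSpace ℝ (Fin n)))
    (x₀ : EuclideanSpace ℝ (Fin n)) (tstar : ℝ) (htstar : 0 < tstar)
    (hF : ∀ x ∈ Metric.ball x₀ tstar, HasFDerivAt F (F' x) x)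
    (hpinv : ∀ x ∈ Metric.ball x₀ tstar, IsMoorePenrose (F' x) (pinv x))
    (hsurj₀ : Function.Surjective (F' x₀))
    (f' : ℝ → ℝ) (hf'0 : f' 0 = -1)
    (hmono : StrictMonoOn f' (Ico (0:ℝ) tstar))
    (hneg : ∀ t, 0 ≤ t → t < tstar → f' t + 1 < 1)
    (hmaj : ∀ x ∈ Metric.ball x₀ tstar,
        ‖(pinv x₀) ∘L (F' x - F' x₀)‖ ≤ f' ‖x - x₀‖ - f' 0) :
    ∀ x ∈ Metric.ball x₀ tstar,
      Function.Surjective (F' x) ∧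
      IsMoorePenrose ((pinv x₀) ∘L (F' x)) ((pinv x) ∘L (F' x₀)) := by

  intro x hx
  have hx₀ : x₀ ∈ Metric.ball x₀ tstar := Metric.mem_ball_self htstar
  obtain ⟨h₀1, h₀2, h₀3, h₀4⟩ := hpinv x₀ hx₀
  obtain ⟨hx1, hx2, hx3, hx4⟩ := hpinv x hx
  -- F' x₀ ∘ pinv x₀ = id pointwise
  have h₀id : ∀ y, F' x₀ (pinv x₀ y) = y := by
    intro y
    obtain ⟨z, hz⟩ := hsurj₀ y
    have := ContinuousLinearMap.ext_iff.mp h₀1 z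
    simp only [ContinuousLinearMap.comp_apply] at this
    rw [← hz, this]
  -- the perturbation
  set G : EuclideanSpace ℝ (Fin n) →L[ℝ] EuclideanSpace ℝ (Fin n) :=
    (pinv x₀) ∘L (F' x - F' x₀) with hG
  have hGnorm : ‖G‖ < 1 := by
    have h1 := hmaj x hx
    have h2 : ‖x - x₀‖ < tstar := by
      rw [← dist_eq_norm]; exact Metric.mem_ball.mp hx
    have h3 := hneg ‖x - x₀‖ (norm_nonneg _) h2
    calc ‖G‖ ≤ f' ‖x - x₀‖ - f' 0 := h1
      _ = f' ‖x - x₀‖ + 1 := by rw [hf'0]; ring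
      _ < 1 := h3
  have hGnorm' : ‖-G‖ < 1 := by rwa [norm_neg]
  let u : (EuclideanSpace ℝ (Fin n) →L[ℝ] EuclideanSpace ℝ (Fin n))ˣ :=
    Units.oneSub (-G) hGnorm'
  have huval : (u : EuclideanSpace ℝ (Fin n) →L[ℝ] EuclideanSpace ℝ (Fin n)) = 1 + G := by
    show 1 - (-G) = 1 + G; rw [sub_neg_eq_add]
  have hfactor : ∀ v, F' x v = F' x₀ ((1 + G) v) := by
    intro v
    have : (1 + G) v = v + pinv x₀ (F' x v - F' x₀ v) := by
      simp [hG, ContinuousLinearMap.add_apply, ContinuousLinearMap.comp_apply,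
        ContinuousLinearMap.sub_apply]
    rw [this, map_add, h₀id]
    simp
  have hsurjx : Function.Surjective (F' x) := by
    intro y
    obtain ⟨z, hz⟩ := hsurj₀ y
    refine ⟨(↑u⁻¹ : EuclideanSpace ℝ (Fin n) →L[ℝ] EuclideanSpace ℝ (Fin n)) z, ?_⟩
    rw [hfactor, ← huval]
    have h := ContinuousLinearMap.ext_iff.mp u.mul_inv z
    rw [ContinuousLinearMap.mul_apply] at h
    rw [h, ← hz]
    rfl
  -- F' x ∘ pinv x = id pointwise
  have hxid : ∀ y, F' x (pinv x y) = y := by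
    intro y
    obtain ⟨z, hz⟩ := hsurjx y
    have := ContinuousLinearMap.ext_iff.mp hx1 z
    simp only [ContinuousLinearMap.comp_apply] at this
    rw [← hz, this]
  -- pointwise versions of MP identities
  have h₀aba : ∀ v, F' x₀ (pinv x₀ (F' x₀ v)) = F' x₀ v := fun v => by
    have := ContinuousLinearMap.ext_iff.mp h₀1 v
    simpa only [ContinuousLinearMap.comp_apply] using this
  have hxbab : ∀ v, pinv x (F' x (pinv x v)) = pinv x v := fun v => by
    have := ContinuousLinearMap.ext_iff.mp hx2 v
    simpa only [ContinuousLinearMap.comp_apply] using this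
  have hxaba : ∀ v, F' x (pinv x (F' x v)) = F' x v := fun v => by
    have := ContinuousLinearMap.ext_iff.mp hx1 v
    simpa only [ContinuousLinearMap.comp_apply] using this
  -- CLM-level equalities AB = pinv x₀ ∘ F' x₀, BA = pinv x ∘ F' x
  have hAB : ((pinv x₀) ∘L (F' x)) ∘L ((pinv x) ∘L (F' x₀)) = (pinv x₀) ∘L (F' x₀) := by
    ext v
    simp only [ContinuousLinearMap.comp_apply]
    rw [hxid]
  have hBA : ((pinv x) ∘L (F' x₀)) ∘L ((pinv x₀) ∘L (F' x)) = (pinv x) ∘L (F' x) := by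
    ext v
    simp only [ContinuousLinearMap.comp_apply]
    rw [h₀id]
  refine ⟨hsurjx, ?_, ?_, ?_, ?_⟩
  · ext v
    simp only [ContinuousLinearMap.comp_apply]
    rw [h₀id, hxaba]
  · ext v
    simp only [ContinuousLinearMap.comp_apply]
    rw [hxid, h₀aba]
  · rw [hAB, h₀4]
  · rw [hBA, hx4]
end

section
/- Let L > 0, β > 0, 0 ≤ κ < 1, λ = (1 - βL)κ, and h(t) = β - (1-λ)t + Lt²/2. If βL ≤ (1-κ)² / ((κ²-κ+1) + √(2κ²-2κ+1)), then (1-λ)² - 2βL ≥ 0 and h has smallest root t* = (1 - λ - √((1-λ)² - 2βL))/L, with h(t) > 0 for t ∈ [0, t*). -/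
private lemma quad_pos_aux (L β c d t : ℝ) (hL : 0 < L) (hd0 : 0 ≤ d)
    (hd2 : d ^ 2 = c ^ 2 - 2 * β * L) (htlt : t < (c - d) / L) :
    0 < β - c * t + L * t ^ 2 / 2 := by
  have hLt : L * t < c - d := by
    rw [lt_div_iff₀ hL] at htlt; linarith
  have h1 : 0 < c - L * t - d := by linarith
  have h2 : 0 < c - L * t + d := by linarith
  nlinarith [mul_pos h1 h2]

private lemma quad_root_aux (L β c d : ℝ) (hL : 0 < L)
    (hd2 : d ^ 2 = c ^ 2 - 2 * β * L) :
    β - c * ((c - d) / L) + L * ((c - d) / L) ^ 2 / 2 = 0 := by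
  field_simp
  nlinarith [hd2]

private lemma quad_le_aux (L β c d t : ℝ) (hL : 0 < L) (hd0 : 0 ≤ d)
    (hd2 : d ^ 2 = c ^ 2 - 2 * β * L)
    (hht : β - c * t + L * t ^ 2 / 2 = 0) : (c - d) / L ≤ t := by
  rw [div_le_iff₀ hL]
  have heq : (c - L * t) ^ 2 = d ^ 2 := by nlinarith [hht]
  nlinarith [heq, hd0, sq_nonneg (c - L * t + d), sq_nonneg (c - L * t - d)]

/-- In the Lipschitz case, if `βL ≤ (1-κ)²/((κ²-κ+1)+√(2κ²-2κ+1))` then the quadratic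
`h(t) = β - (1-λ)t + Lt²/2` with `λ = (1-βL)κ` has smallest root
`t* = (1-λ-√((1-λ)²-2βL))/L`. -/
theorem lipschitz_aux_root (L β κ lam : ℝ) (hL : 0 < L) (hβ : 0 < β)
    (hκ0 : 0 ≤ κ) (hκ1 : κ < 1) (hlam : lam = (1 - β * L) * κ)
    (h : ℝ → ℝ) (hh : h = fun t => β - (1 - lam) * t + L * t ^ 2 / 2)
    (hcond : β * L ≤ (1 - κ) ^ 2 / ((κ ^ 2 - κ + 1) + Real.sqrt (2 * κ ^ 2 - 2 * κ + 1))) :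
    (1 - lam) ^ 2 - 2 * β * L ≥ 0 ∧
    h ((1 - lam - Real.sqrt ((1 - lam) ^ 2 - 2 * β * L)) / L) = 0 ∧
    (∀ t, 0 ≤ t → t < (1 - lam - Real.sqrt ((1 - lam) ^ 2 - 2 * β * L)) / L → 0 < h t) ∧
    (∀ t, 0 ≤ t → h t = 0 →
      (1 - lam - Real.sqrt ((1 - lam) ^ 2 - 2 * β * L)) / L ≤ t) := by
  have hb : 0 < β * L := mul_pos hβ hL
  set s := Real.sqrt (2 * κ ^ 2 - 2 * κ + 1) with hs_def
  have hBnn : (0:ℝ) ≤ 2 * κ ^ 2 - 2 * κ + 1 := by nlinarith [sq_nonneg (κ - 1), sq_nonneg κ]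
  have hs2 : s ^ 2 = 2 * κ ^ 2 - 2 * κ + 1 := Real.sq_sqrt hBnn
  have hs0 : 0 ≤ s := Real.sqrt_nonneg _
  have hAs : 0 < (κ ^ 2 - κ + 1) + s := by nlinarith [sq_nonneg (κ - 1)]
  have hcond' : β * L * ((κ ^ 2 - κ + 1) + s) ≤ (1 - κ) ^ 2 :=
    (le_div_iff₀ hAs).mp hcond
  -- κ² (βL) ≤ A - s
  have hκb : κ ^ 2 * (β * L) ≤ (κ ^ 2 - κ + 1) - s := by
    have key : ((κ ^ 2 - κ + 1) - s) * ((κ ^ 2 - κ + 1) + s) = κ ^ 2 * (1 - κ) ^ 2 := by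
      nlinarith [hs2]
    have h2 : κ ^ 2 * (β * L) * ((κ ^ 2 - κ + 1) + s)
        ≤ ((κ ^ 2 - κ + 1) - s) * ((κ ^ 2 - κ + 1) + s) := by
      rw [key]
      nlinarith [sq_nonneg κ, hcond']
    exact le_of_mul_le_mul_right (by linarith [h2]) hAs
  -- discriminant nonneg
  have hD : (1 - lam) ^ 2 - 2 * β * L ≥ 0 := by
    rcases eq_or_lt_of_le hκ0 with hk | hk
    · -- κ = 0
      have hκ : κ = 0 := hk.symm
      subst hκ
      simp only [mul_zero] at hlam
      have hs1 : s = 1 := by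
        rw [hs_def]; norm_num
      rw [hs1] at hcond'
      nlinarith [hcond', hlam]
    · -- κ > 0 : κ² D = (A - κ²b)² - s² ≥ 0
      have hge : (κ ^ 2 - κ + 1) - s - κ ^ 2 * (β * L) ≥ 0 := by linarith
      have hsq : ((κ ^ 2 - κ + 1) - κ ^ 2 * (β * L)) ^ 2 - s ^ 2 ≥ 0 := by
        nlinarith [hge, hs0]
      have hκ2 : 0 < κ ^ 2 := by positivity
      subst hlam
      nlinarith [hsq, hs2, hκ2]
  set d := Real.sqrt ((1 - lam) ^ 2 - 2 * β * L) with hd_def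
  have hd2 : d ^ 2 = (1 - lam) ^ 2 - 2 * β * L := Real.sq_sqrt hD
  have hd0 : 0 ≤ d := Real.sqrt_nonneg _
  subst hh
  refine ⟨hD, quad_root_aux L β (1 - lam) d hL hd2,
    fun t _ htlt => quad_pos_aux L β (1 - lam) d t hL hd0 hd2 htlt,
    fun t _ hht => quad_le_aux L β (1 - lam) d t hL hd0 hd2 hht⟩
end
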